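/- Let τ > 0, let K ⊆ ℝⁿ, let f : ℝⁿ × ℝⁿ → ℝⁿ be continuously differentiable in its second argument, let h₀, h₁, w : ℝⁿ → ℝ be continuously differentiable, let e₂, e₃ : ℝⁿ → ℝⁿ and C ∈ ℝⁿ. Fix t ∈ ℝ and let x : ℝ → ℝⁿ be continuously differentiable on [t−τ, t] with x(θ) ∈ K and |x′(θ)| ≤ C coordinatewise for all θ ∈ [t−τ, t], and with x′(t) = f(x(t), x(t−τ)). Assume that coordinatewise, for all a, b ∈ K: |∇h₁(b)| ≤ e₂(a) and |∇w(a)ᵀ·J_y f(a,b)| ≤ e₃(a)ᵀ. Then h₀(x(t)) + ∫_{t−τ}^{t} h₁(x(θ)) dθ − ∇w(x(t))·x′(t) ≥ h₀(x(t)) + τ·h₁(x(t)) − (τ²/2)·e₂(x(t))ᵀC − τ·e₃(x(t))ᵀC − ∇w(x(t))·f(x(t), x(t)). -/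

import Mathlib

/-!
Both estimates come from the mean value theorem along the trajectory. By the chain rule and the
coordinatewise bounds, `θ ↦ h₁ (x θ)` and `θ ↦ ∇w(x t) · f (x t, x θ)` are Lipschitz on
`[t - τ, t]` with constants `e₂(x t)ᵀC` and `e₃(x t)ᵀC`. The first gives
`h₁ (x θ) ≥ h₁ (x t) - e₂(x t)ᵀC (t - θ)`, which integrates to the `τ` and `τ²/2` terms; the
second, at `θ = t - τ`, compares `∇w(x t) · x'(t) = ∇w(x t) · f (x t, x (t - τ))` with
`∇w(x t) · f (x t, x t)`.
-/

open intervalIntegral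

theorem abs_apply_le_sum_mul {ι : Type*} [Fintype ι] [DecidableEq ι] (L : (ι → ℝ) →L[ℝ] ℝ)
    {v C e : ι → ℝ} (hv : ∀ i, |v i| ≤ C i) (he : ∀ i, |L (Pi.single i 1)| ≤ e i) :
    |L v| ≤ ∑ i, e i * C i := by
  have hsum : L v = ∑ i, v i * L (Pi.single i 1) := by
    simpa using congrArg L ((Pi.basisFun ℝ ι).sum_repr v).symm
  calc |L v| ≤ ∑ i, |L (Pi.single i 1)| * |v i| := by
        simpa only [hsum, abs_mul, mul_comm] using
          Finset.abs_sum_le_sum_abs (fun i => v i * L (Pi.single i 1)) Finset.univ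
    _ ≤ ∑ i, e i * C i := by
        gcongr with i
        · exact (abs_nonneg _).trans (he i)
        · exact he i
        · exact hv i

theorem abs_comp_sub_le_of_hasFDerivAt {ι : Type*} [Fintype ι] [DecidableEq ι]
    {φ : (ι → ℝ) → ℝ} {φ' : (ι → ℝ) → (ι → ℝ) →L[ℝ] ℝ} {K : Set (ι → ℝ)} {e C : ι → ℝ}
    {x x' : ℝ → ι → ℝ} {a b θ : ℝ}
    (hφ : ∀ y ∈ K, HasFDerivAt φ (φ' y) y) (hφ' : ∀ y ∈ K, ∀ i, |φ' y (Pi.single i 1)| ≤ e i)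
    (hx : ∀ s ∈ Set.Icc a b, HasDerivAt x (x' s) s) (hxK : ∀ s ∈ Set.Icc a b, x s ∈ K)
    (hx'C : ∀ s ∈ Set.Icc a b, ∀ i, |x' s i| ≤ C i) (hθ : θ ∈ Set.Icc a b) :
    |φ (x b) - φ (x θ)| ≤ (∑ i, e i * C i) * (b - θ) := by
  have hderiv : ∀ s ∈ Set.Icc a b,
      HasDerivWithinAt (φ ∘ x) (φ' (x s) (x' s)) (Set.Icc a b) s := fun s hs =>
    ((hφ _ (hxK s hs)).comp_hasDerivAt s (hx s hs)).hasDerivWithinAt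
  have hbound : ∀ s ∈ Set.Icc a b, ‖φ' (x s) (x' s)‖ ≤ ∑ i, e i * C i := fun s hs =>
    abs_apply_le_sum_mul _ (hx'C s hs) (hφ' _ (hxK s hs))
  have hb : b ∈ Set.Icc a b := ⟨hθ.1.trans hθ.2, le_rfl⟩
  simpa [Real.norm_eq_abs, abs_of_nonneg (sub_nonneg.2 hθ.2)] using
    (convex_Icc a b).norm_image_sub_le_of_norm_hasDerivWithin_le hderiv hbound hθ hb

theorem integral_sub_mul_sub (c M t τ : ℝ) :
    ∫ θ in (t - τ)..t, (c - M * (t - θ)) = τ * c - τ ^ 2 / 2 * M := by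
  rw [integral_sub intervalIntegrable_const (Continuous.intervalIntegrable (by fun_prop) _ _),
    integral_const_mul, integral_comp_sub_left (fun θ => θ)]
  simp
  ring

theorem mul_sub_le_integral_of_abs_sub_le {g : ℝ → ℝ} {t τ M : ℝ} (hτ : 0 ≤ τ)
    (hg : ContinuousOn g (Set.Icc (t - τ) t))
    (hlip : ∀ θ ∈ Set.Icc (t - τ) t, |g t - g θ| ≤ M * (t - θ)) :
    τ * g t - τ ^ 2 / 2 * M ≤ ∫ θ in (t - τ)..t, g θ := by
  have hle : t - τ ≤ t := by linarith
  rw [← integral_sub_mul_sub]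
  refine integral_mono_on hle (Continuous.intervalIntegrable (by fun_prop) _ _)
    (hg.intervalIntegrable_of_Icc hle) fun θ hθ => ?_
  linarith [(abs_le.mp (hlip θ hθ)).2]

theorem stmt_5_general {n : ℕ} (τ : ℝ) (hτ : 0 < τ) (K : Set (Fin n → ℝ))
    (f : (Fin n → ℝ) → (Fin n → ℝ) → (Fin n → ℝ))
    (hf : ∀ a : Fin n → ℝ, ContDiff ℝ 1 (f a))
    (h₀ h₁ w : (Fin n → ℝ) → ℝ)
    (hh₁ : ContDiff ℝ 1 h₁)
    (e₂ e₃ : (Fin n → ℝ) → (Fin n → ℝ)) (C : Fin n → ℝ)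
    (t : ℝ) (x x' : ℝ → (Fin n → ℝ))
    (hx : ∀ θ ∈ Set.Icc (t - τ) t, HasDerivAt x (x' θ) θ)
    (hxK : ∀ θ ∈ Set.Icc (t - τ) t, x θ ∈ K)
    (hx'C : ∀ θ ∈ Set.Icc (t - τ) t, ∀ i, |x' θ i| ≤ C i)
    (hx't : x' t = f (x t) (x (t - τ)))
    (he₂ : ∀ a ∈ K, ∀ b ∈ K, ∀ i, |fderiv ℝ h₁ b (Pi.single i 1)| ≤ e₂ a i)
    (he₃ : ∀ a ∈ K, ∀ b ∈ K, ∀ j,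
      |fderiv ℝ w a (fderiv ℝ (f a) b (Pi.single j 1))| ≤ e₃ a j) :
    h₀ (x t) + τ * h₁ (x t) - (τ ^ 2 / 2) * ∑ i, e₂ (x t) i * C i
        - τ * ∑ i, e₃ (x t) i * C i - fderiv ℝ w (x t) (f (x t) (x t)) ≤
      h₀ (x t) + (∫ θ in (t - τ)..t, h₁ (x θ)) - fderiv ℝ w (x t) (x' t) := by
  have ht : t ∈ Set.Icc (t - τ) t := ⟨by linarith, le_rfl⟩
  have hxtK : x t ∈ K := hxK t ht
  have hxc : ContinuousOn x (Set.Icc (t - τ) t) := fun θ hθ =>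
    (hx θ hθ).continuousAt.continuousWithinAt
  have hintegral : τ * h₁ (x t) - τ ^ 2 / 2 * ∑ i, e₂ (x t) i * C i ≤
      ∫ θ in (t - τ)..t, h₁ (x θ) :=
    mul_sub_le_integral_of_abs_sub_le hτ.le (hh₁.continuous.comp_continuousOn hxc)
      fun θ hθ => abs_comp_sub_le_of_hasFDerivAt
        (fun y _ => (hh₁.differentiable one_ne_zero y).hasFDerivAt)
        (fun y hy => he₂ _ hxtK y hy) hx hxK hx'C hθ
  have hdelay : |fderiv ℝ w (x t) (f (x t) (x t)) - fderiv ℝ w (x t) (f (x t) (x (t - τ)))| ≤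
      (∑ i, e₃ (x t) i * C i) * (t - (t - τ)) :=
    abs_comp_sub_le_of_hasFDerivAt (φ := fun y => fderiv ℝ w (x t) (f (x t) y))
      (fun y _ => (fderiv ℝ w (x t)).hasFDerivAt.comp y
        ((hf (x t)).differentiable one_ne_zero y).hasFDerivAt)
      (fun y hy => he₃ _ hxtK y hy) hx hxK hx'C ⟨le_rfl, by linarith⟩
  rw [hx't]
  linarith [(abs_le.mp hdelay).1]

/-- Lower bound on `H(x_t) - (d/dt) w(x(t))` for the integral-form reach-avoid
barrier functional (derivation of the reach condition (2c) from (6c) in the proof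
of Theorem 2): under the coordinatewise bounds `|∇h₁(b)| ≤ e₂(a)` and
`|∇w(a)ᵀ·J_y f(a,b)| ≤ e₃(a)ᵀ` on `K`, `|x'| ≤ C` on `[t-τ, t]`, and
`x'(t) = f(x(t), x(t-τ))`,
`h₀(x t) + ∫_{t-τ}^{t} h₁(x θ) dθ - ∇w(x t)·x'(t) ≥
 h₀(x t) + τ·h₁(x t) - (τ²/2)·e₂(x t)ᵀC - τ·e₃(x t)ᵀC - ∇w(x t)·f(x t, x t)`. -/
theorem stmt_5 {n : ℕ} (τ : ℝ) (hτ : 0 < τ) (K : Set (Fin n → ℝ))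
    (f : (Fin n → ℝ) → (Fin n → ℝ) → (Fin n → ℝ))
    (hf : ∀ a : Fin n → ℝ, ContDiff ℝ 1 (f a))
    (h₀ h₁ w : (Fin n → ℝ) → ℝ)
    (hh₀ : ContDiff ℝ 1 h₀) (hh₁ : ContDiff ℝ 1 h₁) (hw : ContDiff ℝ 1 w)
    (e₂ e₃ : (Fin n → ℝ) → (Fin n → ℝ)) (C : Fin n → ℝ)
    (t : ℝ) (x x' : ℝ → (Fin n → ℝ))
    (hx : ∀ θ ∈ Set.Icc (t - τ) t, HasDerivAt x (x' θ) θ)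
    (hx'c : ContinuousOn x' (Set.Icc (t - τ) t))
    (hxK : ∀ θ ∈ Set.Icc (t - τ) t, x θ ∈ K)
    (hx'C : ∀ θ ∈ Set.Icc (t - τ) t, ∀ i, |x' θ i| ≤ C i)
    (hx't : x' t = f (x t) (x (t - τ)))
    (he₂ : ∀ a ∈ K, ∀ b ∈ K, ∀ i, |fderiv ℝ h₁ b (Pi.single i 1)| ≤ e₂ a i)
    (he₃ : ∀ a ∈ K, ∀ b ∈ K, ∀ j,
      |fderiv ℝ w a (fderiv ℝ (f a) b (Pi.single j 1))| ≤ e₃ a j) :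
    h₀ (x t) + τ * h₁ (x t) - (τ ^ 2 / 2) * ∑ i, e₂ (x t) i * C i
        - τ * ∑ i, e₃ (x t) i * C i - fderiv ℝ w (x t) (f (x t) (x t)) ≤
      h₀ (x t) + (∫ θ in (t - τ)..t, h₁ (x θ)) - fderiv ℝ w (x t) (x' t) :=
  stmt_5_general τ hτ K f hf h₀ h₁ w hh₁ e₂ e₃ C t x x' hx hxK hx'C hx't he₂ he₃
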